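/- arXiv:2204.02131 — 2 statements merged into one kernel-verified Lean document; each statement's English description precedes it below -/
import Mathlib

section
/- Assume k has characteristic l. If f ∈ C_c^∞(X, k) satisfies N(f) = 0 and f vanishes identically on the fixed-point set X^γ, then f lies in the image of (id − γ): there exists g ∈ C_c^∞(X, k) with f = g − γ·g. (Together with surjectivity of restriction, this computes the Tate cohomology group Ĥ¹ of C_c^∞(X, k).) -/
/-!
Additive Hilbert 90: for `σ` with `σ^[l] = id`, put
`g = ∑_{i<l} (∑_{j<i} f ∘ σ^[j]) * (θ ∘ σ^[i])`; telescoping gives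
`g - g ∘ σ = f * ∑_{i<l} θ ∘ σ^[i]` as soon as `∑_{i<l} f ∘ σ^[i] = 0`. So it suffices to find a
locally constant, compactly supported `θ` whose orbit sums are `1` on the support of `f`; we take
`θ` the indicator of a compact open fundamental domain `D ⊆ supp f` for `σ = γ⁻¹`. Since `l` is
prime and `f` vanishes on `X^γ`, `σ` acts freely on `supp f`, so each of its points has a clopen
neighbourhood disjoint from its translates, and finitely many of these, covering the compact set
`supp f`, are assembled one by one into `D`.
-/

open Function Finset TopologicalSpace

theorem Homeomorph.coe_pow {X : Type*} [TopologicalSpace X] (h : X ≃ₜ X) :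
    ∀ n : ℕ, ⇑(h ^ n) = h^[n]
  | 0 => rfl
  | n + 1 => by rw [pow_succ, iterate_succ, ← coe_pow h n]; rfl

theorem Function.IsPeriodicPt.iterate_ne_self_of_prime {α : Type*} {σ : α → α} {p : ℕ} {x : α}
    (hp : p.Prime) (hx : IsPeriodicPt σ p x) (hσx : σ x ≠ x) {i : ℕ} (hi : i ∈ Ioo 0 p) :
    σ^[i] x ≠ x := by
  intro h
  obtain ⟨hi0, hip⟩ := mem_Ioo.1 hi
  have hgcd : i.gcd p = 1 := (Nat.coprime_of_lt_prime hi0.ne' hip hp).symm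
  have h1 : IsPeriodicPt σ 1 x := hgcd ▸ IsPeriodicPt.gcd h hx
  exact hσx h1

theorem Finset.sum_range_succ_comp_eq_of_eq {M : Type*} [AddCommMonoid M] [IsRightCancelAdd M]
    {F : ℕ → M} {n : ℕ} (hF : F n = F 0) :
    ∑ i ∈ range n, F (i + 1) = ∑ i ∈ range n, F i :=
  add_right_cancel <| (sum_range_succ' F n).symm.trans <| by rw [sum_range_succ, hF]

theorem IsLocallyConstant.finset_sum {X Y ι : Type*} [TopologicalSpace X] [AddCommMonoid Y]
    (s : Finset ι) {F : ι → X → Y} (hF : ∀ i ∈ s, IsLocallyConstant (F i)) :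
    IsLocallyConstant (∑ i ∈ s, F i) :=
  sum_induction F IsLocallyConstant (fun _ _ hf hg => hf.add hg) (.const 0) hF

section Hilbert90

variable {X R : Type*} [Ring R] {σ : X → X} {n : ℕ}

def hilbert90Primitive (σ : X → X) (n : ℕ) (a θ : X → R) : X → R :=
  ∑ i ∈ range n, (∑ j ∈ range i, a ∘ σ^[j]) * (θ ∘ σ^[i])

theorem hilbert90Primitive_apply (σ : X → X) (n : ℕ) (a θ : X → R) (x : X) :
    hilbert90Primitive σ n a θ x = ∑ i ∈ range n, (∑ j ∈ range i, a (σ^[j] x)) * θ (σ^[i] x) := by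
  simp only [hilbert90Primitive, Finset.sum_apply, Pi.mul_apply, comp_apply]

theorem hilbert90Primitive_sub_comp (hσ : ∀ x, σ^[n] x = x)
    {a : X → R} (ha : ∀ x, ∑ i ∈ range n, a (σ^[i] x) = 0) (θ : X → R) (x : X) :
    hilbert90Primitive σ n a θ x - hilbert90Primitive σ n a θ (σ x) =
      a x * ∑ i ∈ range n, θ (σ^[i] x) := by
  set A : ℕ → R := fun i => ∑ j ∈ range i, a (σ^[j] x)
  have hA : ∀ i, ∑ j ∈ range i, a (σ^[j] (σ x)) = A (i + 1) - a x := fun i => by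
    simp only [A, sum_range_succ', iterate_succ_apply, iterate_zero_apply, add_sub_cancel_right]
  have hθ : ∑ i ∈ range n, θ (σ^[i + 1] x) = ∑ i ∈ range n, θ (σ^[i] x) :=
    sum_range_succ_comp_eq_of_eq (F := fun i => θ (σ^[i] x)) (by simp [hσ])
  have hAθ : ∑ i ∈ range n, A (i + 1) * θ (σ^[i + 1] x) = hilbert90Primitive σ n a θ x :=
    (sum_range_succ_comp_eq_of_eq (F := fun i => A i * θ (σ^[i] x)) (by simp [A, ha])).trans
      (hilbert90Primitive_apply σ n a θ x).symm
  have hσx : hilbert90Primitive σ n a θ (σ x) =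
      ∑ i ∈ range n, A (i + 1) * θ (σ^[i + 1] x) - a x * ∑ i ∈ range n, θ (σ^[i + 1] x) := by
    simp only [hilbert90Primitive_apply, hA]
    simp only [← iterate_succ_apply, sub_mul, sum_sub_distrib, mul_sum]
  rw [hσx, hAθ, hθ, sub_sub_cancel]

theorem hilbert90Primitive_sub_comp_eq_self (hσ : ∀ x, σ^[n] x = x)
    {a θ : X → R} (ha : ∀ x, ∑ i ∈ range n, a (σ^[i] x) = 0)
    (hθ : ∀ x, a x ≠ 0 → ∑ i ∈ range n, θ (σ^[i] x) = 1) (x : X) :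
    a x = hilbert90Primitive σ n a θ x - hilbert90Primitive σ n a θ (σ x) := by
  rw [hilbert90Primitive_sub_comp hσ ha]
  by_cases hx : a x = 0
  · rw [hx, zero_mul]
  · rw [hθ x hx, mul_one]

variable [TopologicalSpace X]

theorem isLocallyConstant_hilbert90Primitive (hσc : Continuous σ) {a θ : X → R}
    (ha : IsLocallyConstant a) (hθ : IsLocallyConstant θ) :
    IsLocallyConstant (hilbert90Primitive σ n a θ) :=
  .finset_sum _ fun i _ =>
    (IsLocallyConstant.finset_sum _ fun j _ => ha.comp_continuous (hσc.iterate j)).mul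
      (hθ.comp_continuous (hσc.iterate i))

theorem hasCompactSupport_hilbert90Primitive (σ : X ≃ₜ X) (a : X → R) {θ : X → R}
    (hθ : HasCompactSupport θ) : HasCompactSupport (hilbert90Primitive σ n a θ) :=
  .finset_sum fun i _ => .mul_left <| by
    simpa only [Homeomorph.coe_pow] using hθ.comp_isClosedEmbedding (σ ^ i).isClosedEmbedding

end Hilbert90

section FundamentalDomain

variable {X : Type*} {σ : X → X} {n : ℕ}

def DisjointIterates (σ : X → X) (n : ℕ) (V : Set X) : Prop :=
  ∀ i ∈ Ioo 0 n, Disjoint V (σ^[i] ⁻¹' V)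

theorem DisjointIterates.mono {U V : Set X} (hV : DisjointIterates σ n V) (hUV : U ⊆ V) :
    DisjointIterates σ n U :=
  fun i hi => (hV i hi).mono hUV (Set.preimage_mono hUV)

theorem DisjointIterates.eq_of_iterate_mem {D : Set X} (hD : DisjointIterates σ n D) {x : X}
    {i j : ℕ} (hi : i < n) (hj : j < n) (hiD : σ^[i] x ∈ D) (hjD : σ^[j] x ∈ D) : i = j := by
  wlog hij : i ≤ j generalizing i j
  · exact (this hj hi hjD hiD (le_of_not_ge hij)).symm
  by_contra hne
  refine Set.disjoint_left.1 (hD (j - i) (mem_Ioo.2 ⟨by omega, by omega⟩)) hiD ?_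
  rwa [Set.mem_preimage, ← iterate_add_apply, Nat.sub_add_cancel hij]

variable [TopologicalSpace X]

theorem exists_isClopen_disjointIterates [T1Space X]
    (hX : IsTopologicalBasis {s : Set X | IsClopen s}) (hσc : Continuous σ) {x : X}
    (hx : ∀ i ∈ Ioo 0 n, σ^[i] x ≠ x) {U : Set X} (hU : IsOpen U) (hxU : x ∈ U) :
    ∃ V, IsClopen V ∧ x ∈ V ∧ V ⊆ U ∧ DisjointIterates σ n V := by
  set orbit : Set X := (σ^[·] x) '' Ioo 0 n
  have horbit : IsClosed orbit := ((Ioo 0 n).finite_toSet.image _).isClosed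
  obtain ⟨W, hW, hxW, hWU⟩ : ∃ W, IsClopen W ∧ x ∈ W ∧ W ⊆ U \ orbit :=
    hX.exists_subset_of_mem_open ⟨hxU, fun ⟨i, hi, h⟩ => hx i hi h⟩ (hU.sdiff horbit)
  -- `W` misses the other points of the orbit of `x`, so `x` survives removing the `σ^[i] ⁻¹' W`.
  refine ⟨W \ ⋃ i ∈ Ioo 0 n, σ^[i] ⁻¹' W,
    hW.diff (isClopen_biUnion_finset fun i _ => hW.preimage (hσc.iterate i)),
    ⟨hxW, ?_⟩, fun y hy => (hWU hy.1).1, fun i hi => ?_⟩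
  · simp only [Set.mem_iUnion, Set.mem_preimage, not_exists]
    exact fun i hi hiW => (hWU hiW).2 ⟨i, hi, rfl⟩
  · exact Set.disjoint_left.2 fun y hy hy' => hy.2 (Set.mem_biUnion hi hy'.1)

theorem exists_isClopen_disjointIterates_of_finset (hσc : Continuous σ)
    (hσ : ∀ x, σ^[n] x = x) (hn : 0 < n) {ι : Type*} (s : Finset ι) {V : ι → Set X}
    (hV : ∀ j ∈ s, IsClopen (V j) ∧ DisjointIterates σ n (V j)) :
    ∃ D ⊆ ⋃ j ∈ s, V j, IsClopen D ∧ DisjointIterates σ n D ∧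
      ∀ x ∈ ⋃ j ∈ s, V j, ∃ i < n, σ^[i] x ∈ D := by
  classical
  induction s using Finset.induction_on with
  | empty => exact ⟨∅, by simp, isClopen_empty, fun _ _ => disjoint_bot_left, by simp⟩
  | insert j s _ ih =>
    obtain ⟨D, hDs, hD, hDd, hDcov⟩ := ih fun k hk => hV k (mem_insert_of_mem hk)
    obtain ⟨hVj, hVjd⟩ := hV j (mem_insert_self j s)
    -- Orbits meeting `V j` are now represented by their (unique) point in `V j`.
    set T := ⋃ i ∈ range n, σ^[i] ⁻¹' V j
    have hT : ∀ y, y ∈ T ↔ ∃ i < n, σ^[i] y ∈ V j := by simp [T]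
    rw [Finset.set_biUnion_insert]
    refine ⟨V j ∪ (D \ T), Set.union_subset_union_right _ (Set.sdiff_subset.trans hDs),
      hVj.union (hD.diff (isClopen_biUnion_finset fun i _ => hVj.preimage (hσc.iterate i))),
      fun i hi => Set.disjoint_left.2 ?_, ?_⟩
    · obtain ⟨hi0, hin⟩ := mem_Ioo.1 hi
      rintro y (hy | hy) (hy' | hy')
      · exact Set.disjoint_left.1 (hVjd i hi) hy hy'
      · refine hy'.2 ((hT _).2 ⟨n - i, by omega, ?_⟩)
        rwa [← iterate_add_apply, Nat.sub_add_cancel hin.le, hσ]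
      · exact hy.2 ((hT y).2 ⟨i, hin, hy'⟩)
      · exact Set.disjoint_left.1 (hDd i hi) hy.1 hy'.1
    · rintro x (hx | hx)
      · exact ⟨0, hn, Or.inl hx⟩
      obtain ⟨i, hi, hiD⟩ := hDcov x hx
      by_cases hiT : σ^[i] x ∈ T
      · obtain ⟨m, -, hmV⟩ := (hT _).1 hiT
        refine ⟨(m + i) % n, Nat.mod_lt _ hn, Or.inl ?_⟩
        rwa [IsPeriodicPt.iterate_mod_apply (hσ x), iterate_add_apply]
      · exact ⟨i, hi, Or.inr ⟨hiD, hiT⟩⟩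

theorem exists_isClopen_subset_existsUnique_iterate_mem [T1Space X]
    (hX : IsTopologicalBasis {s : Set X | IsClopen s}) (hσc : Continuous σ)
    (hσ : ∀ x, σ^[n] x = x) (hn : 0 < n) {S : Set X} (hS : IsCompact S) (hSo : IsOpen S)
    (hfree : ∀ x ∈ S, ∀ i ∈ Ioo 0 n, σ^[i] x ≠ x) :
    ∃ D ⊆ S, IsClopen D ∧ ∀ x ∈ S, ∃! i, i < n ∧ σ^[i] x ∈ D := by
  choose V hV hxV hVS hVd using fun x : S =>
    exists_isClopen_disjointIterates hX hσc (hfree x x.2) hSo x.2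
  obtain ⟨t, ht⟩ := hS.elim_finite_subcover V (fun x => (hV x).isOpen)
    fun x hx => Set.mem_iUnion.2 ⟨⟨x, hx⟩, hxV _⟩
  obtain ⟨D, hDV, hD, hDd, hDcov⟩ :=
    exists_isClopen_disjointIterates_of_finset hσc hσ hn t fun x _ => ⟨hV x, hVd x⟩
  refine ⟨D, hDV.trans (Set.iUnion₂_subset fun x _ => hVS x), hD, fun x hx => ?_⟩
  obtain ⟨i, hi, hiD⟩ := hDcov x (ht hx)
  exact ⟨i, ⟨hi, hiD⟩, fun j hj => hDd.eq_of_iterate_mem hj.1 hi hj.2 hiD⟩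

end FundamentalDomain

theorem sum_indicator_one_iterate_eq_one {X R : Type*} [AddCommMonoidWithOne R] {σ : X → X}
    {n : ℕ} {D : Set X} {x : X} (hx : ∃! i, i < n ∧ σ^[i] x ∈ D) :
    ∑ i ∈ range n, D.indicator (1 : X → R) (σ^[i] x) = 1 := by
  obtain ⟨i, ⟨hi, hiD⟩, huniq⟩ := hx
  rw [sum_eq_single_of_mem i (mem_range.2 hi) fun j hj hji =>
      Set.indicator_of_notMem (fun hjD => hji (huniq j ⟨mem_range.1 hj, hjD⟩)) _,
    Set.indicator_of_mem hiD, Pi.one_apply]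

theorem tate_H1_vanishing_part_general
    (l : ℕ) (hl : l.Prime)
    (X : Type*) [TopologicalSpace X] [LocallyCompactSpace X] [T2Space X]
    [TotallyDisconnectedSpace X]
    (γ : X ≃ₜ X) (hγl : ∀ x, (⇑γ)^[l] x = x)
    (k : Type*) [Field k]
    (f : X → k) (hflc : IsLocallyConstant f) (hfcs : HasCompactSupport f)
    (hN : ∀ x, ∑ i ∈ Finset.range l, f ((⇑γ.symm)^[i] x) = 0)
    (hvan : ∀ x, γ x = x → f x = 0) :
    ∃ g : X → k, IsLocallyConstant g ∧ HasCompactSupport g ∧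
      ∀ x, f x = g x - g (γ.symm x) := by
  have hσ : ∀ x, (⇑γ.symm)^[l] x = x := fun x => by
    simpa only [hγl] using (LeftInverse.iterate γ.symm_apply_apply l) x
  have hS : IsClopen (support f) := (hflc.isClopen_fiber 0).compl
  have hScompact : IsCompact (support f) := hfcs.of_isClosed_subset hS.isClosed (subset_tsupport f)
  have hfree : ∀ x ∈ support f, ∀ i ∈ Ioo 0 l, (⇑γ.symm)^[i] x ≠ x := fun x hx _ hi =>
    IsPeriodicPt.iterate_ne_self_of_prime hl (hσ x)
      (fun h => hx (hvan x (γ.symm_apply_eq.1 h).symm)) hi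
  obtain ⟨D, hDS, hD, hDf⟩ := exists_isClopen_subset_existsUnique_iterate_mem
    loc_compact_Haus_tot_disc_of_zero_dim γ.symm.continuous hσ hl.pos hScompact hS.isOpen hfree
  refine ⟨hilbert90Primitive γ.symm l f (D.indicator 1),
    isLocallyConstant_hilbert90Primitive γ.symm.continuous hflc ?_,
    hasCompactSupport_hilbert90Primitive γ.symm f ?_,
    hilbert90Primitive_sub_comp_eq_self hσ hN fun x hx =>
      sum_indicator_one_iterate_eq_one (hDf x hx)⟩
  · exact LocallyConstant.coe_charFn k hD ▸ (LocallyConstant.charFn k hD).isLocallyConstant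
  · exact .intro (hScompact.of_isClosed_subset hD.isClosed hDS) fun x hx =>
      Set.indicator_of_notMem hx _

/-- Let `γ` be a homeomorphism, of order dividing the prime `l`, of a locally compact,
Hausdorff, totally disconnected, second countable space `X`, and let `k` be a field of
characteristic `l`. If `f ∈ C_c^∞(X, k)` satisfies `N(f) = ∑_{i=0}^{l-1} γ^i · f = 0`
(where `(γ^i · f)(x) = f(γ^{-i} x)`) and `f` vanishes on the fixed-point set `X^γ`,
then `f` is in the image of `id − γ`: `f = g − γ · g` for some `g ∈ C_c^∞(X, k)`,
i.e. `f x = g x - g (γ⁻¹ x)` for all `x`. -/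
theorem tate_H1_vanishing_part
    (l : ℕ) (hl : l.Prime)
    (X : Type*) [TopologicalSpace X] [LocallyCompactSpace X] [T2Space X]
    [TotallyDisconnectedSpace X] [SecondCountableTopology X]
    (γ : X ≃ₜ X) (hγl : ∀ x, (⇑γ)^[l] x = x)
    (k : Type*) [Field k] [CharP k l]
    (f : X → k) (hflc : IsLocallyConstant f) (hfcs : HasCompactSupport f)
    (hN : ∀ x, ∑ i ∈ Finset.range l, f ((⇑γ.symm)^[i] x) = 0)
    (hvan : ∀ x, γ x = x → f x = 0) :
    ∃ g : X → k, IsLocallyConstant g ∧ HasCompactSupport g ∧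
      ∀ x, f x = g x - g (γ.symm x) :=
  tate_H1_vanishing_part_general l hl X γ hγl k f hflc hfcs hN hvan
end

section
/- Assume k has characteristic l. Let I : C_c^∞(X, k) → k be a k-linear functional that is γ-invariant, i.e., I(γ·f) = I(f) for all f. Then there exists a unique k-linear functional J : C_c^∞(X^γ, k) → k such that I(φ) = J(φ|_{X^γ}) for every γ-invariant function φ ∈ C_c^∞(X, k). -/
open Function Set

/-- The space `C_c^∞(X, k)` of locally constant, compactly supported `k`-valued
functions on `X`, as a `k`-submodule of `X → k`. -/
def Ccinf (X : Type*) [TopologicalSpace X] (k : Type*) [Field k] :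
    Submodule k (X → k) where
  carrier := {f | IsLocallyConstant f ∧ HasCompactSupport f}
  add_mem' := fun hf hg => ⟨hf.1.comp₂ hg.1 (· + ·), hf.2.add hg.2⟩
  zero_mem' := ⟨IsLocallyConstant.const 0, by
    simp [HasCompactSupport, tsupport, Function.support_zero]⟩
  smul_mem' := fun c f hf =>
    ⟨hf.1.comp (c • ·), hf.2.mono (Function.support_const_smul_subset c f)⟩

variable {X : Type*} [TopologicalSpace X] {k : Type*} [Field k]

/-- The action of a homeomorphism `γ` on `C_c^∞(X, k)`, given by
`(γ · f)(x) = f (γ⁻¹ x)`, as a `k`-linear endomorphism. -/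
def gammaT (γ : X ≃ₜ X) : Ccinf X k →ₗ[k] Ccinf X k where
  toFun f := ⟨fun x => (f : X → k) (γ.symm x),
    f.2.1.comp_continuous γ.symm.continuous,
    f.2.2.comp_isClosedEmbedding γ.symm.isClosedEmbedding⟩
  map_add' f g := by ext x; rfl
  map_smul' c f := by ext x; rfl

/-- Restriction of functions in `C_c^∞(X, k)` to the (closed) fixed-point set
`X^γ = {x : X // γ x = x}`, as a `k`-linear map to `C_c^∞(X^γ, k)`. -/
def resL (γ : X ≃ₜ X) [T2Space X] :
    Ccinf X k →ₗ[k] Ccinf {x : X // γ x = x} k where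
  toFun f := ⟨fun y => (f : X → k) y.1,
    f.2.1.comp_continuous continuous_subtype_val,
    f.2.2.comp_isClosedEmbedding
      ((isClosed_eq γ.continuous continuous_id).isClosedEmbedding_subtypeVal)⟩
  map_add' f g := by ext x; rfl
  map_smul' c f := by ext x; rfl

/-- The norm operator `N = ∑_{i=0}^{l-1} γ^i` on `C_c^∞(X, k)`. -/
def normOp (γ : X ≃ₜ X) (l : ℕ) : Module.End k (Ccinf X k) :=
  ∑ i ∈ Finset.range l, gammaT γ ^ i

/-! Restricting γ-invariant functions to `X^γ` is onto `C_c^∞(X^γ, k)`: a compact open subset of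
`X^γ` is cut out by a compact open `C ⊆ X`, and then also by the γ-stable `⋂ᵢ γ⁻ⁱ C`. Its kernel
is killed by `I`. An invariant `φ` vanishing on `X^γ` is a combination of indicators of γ-stable
compact open sets `V` without fixed points. As `l` is prime, no point of `V` is fixed by any
`γ^i`, `0 < i < l`, so `V` is covered by finitely many saturations of compact opens whose `l`
translates are disjoint; peeling them off one at a time gives a compact open `E` with
`1_V = N(1_E)`, whence `I(1_V) = l • I(1_E) = 0`. So `I` factors uniquely through restriction. -/

namespace Function

variable {α : Type*} {f : α → α} {l : ℕ} {x : α}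

theorem IsPeriodicPt.isFixedPt_of_prime (hx : IsPeriodicPt f l x) (hl : l.Prime) {n : ℕ}
    (hn : IsPeriodicPt f n x) (hn0 : 0 < n) (hnl : n < l) : IsFixedPt f x := by
  rcases hl.eq_one_or_self_of_dvd _ hx.minimalPeriod_dvd with h | h
  · exact minimalPeriod_eq_one_iff_isFixedPt.mp h
  · exact absurd (Nat.le_of_dvd hn0 (h ▸ hn.minimalPeriod_dvd)) (not_le.mpr hnl)

theorem IsPeriodicPt.forall_lt_iterate_apply_iff (hx : IsPeriodicPt f l x) (p : α → Prop) :
    (∀ i < l, p (f^[i] (f x))) ↔ ∀ i < l, p (f^[i] x) := by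
  cases l with
  | zero => simp
  | succ n =>
    simp only [← iterate_succ_apply, Nat.forall_lt_succ_right (p := fun i => p (f^[i + 1] x)),
      Nat.forall_lt_succ_left (p := fun i => p (f^[i] x)), hx.eq, iterate_zero_apply]
    exact and_comm

theorem IsPeriodicPt.birkhoffSum_apply {G : Type*} [AddCommGroup G] (hx : IsPeriodicPt f l x)
    (g : α → G) : birkhoffSum f g l (f x) = birkhoffSum f g l x :=
  sub_eq_zero.1 <| by rw [birkhoffSum_apply_sub_birkhoffSum, hx.eq, sub_self]

end Function

theorem LinearMap.exists_comp_eq_of_surjective_of_ker_le {R M N P : Type*} [Ring R]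
    [AddCommGroup M] [AddCommGroup N] [AddCommGroup P] [Module R M] [Module R N] [Module R P]
    {f : M →ₗ[R] N} (hf : Function.Surjective f) {g : M →ₗ[R] P} (h : ker f ≤ ker g) :
    ∃ J : N →ₗ[R] P, ∀ m, J (f m) = g m :=
  ⟨(ker f).liftQ g h ∘ₗ (f.quotKerEquivOfSurjective hf).symm.toLinearMap, by simp⟩

section Tiling

open Function

variable {α M : Type*} {f : α → α} {l : ℕ}

theorem indicator_biUnion_preimage_iterate_eq_birkhoffSum [AddCommMonoidWithOne M] {W : Set α}
    (hW : ∀ n ∈ Finset.Ioo 0 l, Disjoint W (f^[n] ⁻¹' W)) :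
    (⋃ i ∈ Finset.range l, f^[i] ⁻¹' W).indicator 1 =
      birkhoffSum f (W.indicator (1 : α → M)) l := by
  have hdisj : ∀ i j, i < j → j < l → Disjoint (f^[i] ⁻¹' W) (f^[j] ⁻¹' W) := fun i j hij hjl => by
    have := (hW (j - i) (Finset.mem_Ioo.2 ⟨by omega, by omega⟩)).preimage f^[i]
    rwa [← preimage_comp, ← iterate_add, Nat.sub_add_cancel hij.le] at this
  funext x
  rw [Finset.indicator_biUnion_apply]
  · rfl
  · intro i hi j hj hij
    simp only [Finset.coe_range, mem_Iio] at hi hj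
    rcases hij.lt_or_gt with h | h
    exacts [hdisj i j h hj, (hdisj j i h hi).symm]

theorem indicator_union_eq_birkhoffSum [Ring M] [Nontrivial M]
    (hf : ∀ x, IsPeriodicPt f l x) {A B EA EB : Set α} (hEA : EA ⊆ A)
    (hA : A.indicator 1 = birkhoffSum f (EA.indicator (1 : α → M)) l)
    (hB : B.indicator 1 = birkhoffSum f (EB.indicator (1 : α → M)) l) :
    (A ∪ B).indicator 1 = birkhoffSum f ((EA ∪ (EB \ A)).indicator (1 : α → M)) l := by
  classical
  have hAinv : ∀ i x, f^[i] x ∈ A ↔ x ∈ A := by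
    have h : A.indicator (1 : α → M) ∘ f = A.indicator 1 :=
      funext fun x => by rw [comp_apply, hA, (hf x).birkhoffSum_apply]
    intro i x
    rw [← indicator_eq_one_iff_mem M, ← comp_apply (f := A.indicator 1), iterate_invariant h,
      indicator_eq_one_iff_mem]
  funext x
  by_cases hx : x ∈ A
  · rw [indicator_of_mem (mem_union_left B hx), ← indicator_of_mem hx (1 : α → M), hA]
    refine Finset.sum_congr rfl fun i _ => ?_
    have := (hAinv i x).2 hx
    simp [Set.indicator_apply, this]
  · rw [show (A ∪ B).indicator (1 : α → M) x = B.indicator 1 x by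
      simp [Set.indicator_apply, hx], hB]
    refine Finset.sum_congr rfl fun i _ => ?_
    have := mt (hAinv i x).1 hx
    simp [Set.indicator_apply, this, mt (@hEA _) this]

theorem exists_isClopen_indicator_biUnion_eq_birkhoffSum [TopologicalSpace α] [Ring M]
    [Nontrivial M] (hf : Continuous f) (hl : 0 < l) (hfl : ∀ x, IsPeriodicPt f l x)
    {ι : Type*} (t : Finset ι) {W : ι → Set α}
    (hW : ∀ j ∈ t, IsClopen (W j))
    (hWd : ∀ j ∈ t, ∀ n ∈ Finset.Ioo 0 l, Disjoint (W j) (f^[n] ⁻¹' W j)) :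
    ∃ E, IsClopen E ∧ E ⊆ ⋃ j ∈ t, W j ∧
      (⋃ j ∈ t, ⋃ i ∈ Finset.range l, f^[i] ⁻¹' W j).indicator 1 =
        birkhoffSum f (E.indicator (1 : α → M)) l := by
  classical
  induction t using Finset.induction_on with
  | empty => exact ⟨∅, isClopen_empty, empty_subset _, by funext x; simp [birkhoffSum]⟩
  | insert j t _ ih =>
    obtain ⟨E, hE, hEW, hEeq⟩ := ih (fun j' h => hW j' (Finset.mem_insert_of_mem h))
      (fun j' h => hWd j' (Finset.mem_insert_of_mem h))
    set A := ⋃ j ∈ t, ⋃ i ∈ Finset.range l, f^[i] ⁻¹' W j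
    have hWA : ⋃ j ∈ t, W j ⊆ A := iUnion₂_mono fun j _ =>
      subset_biUnion_of_mem (u := fun i => f^[i] ⁻¹' W j) (Finset.mem_range.2 hl)
    have hA : IsClopen A := t.finite_toSet.isClopen_biUnion fun j hj =>
      (Finset.range l).finite_toSet.isClopen_biUnion fun i _ =>
        (hW j (Finset.mem_insert_of_mem hj)).preimage (hf.iterate i)
    refine ⟨E ∪ (W j \ A), hE.union ((hW j (Finset.mem_insert_self j t)).diff hA), ?_, ?_⟩
    · rw [Finset.set_biUnion_insert]
      exact union_subset (hEW.trans subset_union_right) (sdiff_subset.trans subset_union_left)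
    · rw [Finset.set_biUnion_insert, union_comm]
      exact indicator_union_eq_birkhoffSum hfl (hEW.trans hWA) hEeq
        (indicator_biUnion_preimage_iterate_eq_birkhoffSum (hWd j (Finset.mem_insert_self j t)))

end Tiling

section ZeroDimensional

open Function Filter Topology

theorem exists_mem_nhds_disjoint_preimage [T2Space X] {g : X → X} {x : X} (hg : ContinuousAt g x)
    (hx : g x ≠ x) : ∃ s ∈ 𝓝 x, Disjoint s (g ⁻¹' s) := by
  obtain ⟨u, v, hu, hv, huv⟩ := t2_separation_nhds hx.symm
  exact ⟨u ∩ g ⁻¹' v, inter_mem hu (hg hv),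
    disjoint_left.2 fun y hy hgy => huv.ne_of_mem hgy.1 hy.2 rfl⟩

variable [LocallyCompactSpace X] [T2Space X] [TotallyDisconnectedSpace X]

theorem IsCompact.exists_isClopen_isCompact_between {K U : Set X} (hK : IsCompact K)
    (hU : IsOpen U) (hKU : K ⊆ U) : ∃ C, IsClopen C ∧ IsCompact C ∧ K ⊆ C ∧ C ⊆ U := by
  have hpt : ∀ x ∈ K, ∃ V, IsClopen V ∧ IsCompact V ∧ x ∈ V ∧ V ⊆ U := fun x hx => by
    obtain ⟨L, hL, hxL, hLU⟩ := exists_compact_subset hU (hKU hx)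
    obtain ⟨V, hV, hxV, hVL⟩ :=
      loc_compact_Haus_tot_disc_of_zero_dim.mem_nhds_iff.1 (isOpen_interior.mem_nhds hxL)
    exact ⟨V, hV, hL.of_isClosed_subset hV.1 (hVL.trans interior_subset), hxV,
      (hVL.trans interior_subset).trans hLU⟩
  choose! V hV using hpt
  obtain ⟨t, htK, hKt⟩ :=
    hK.elim_nhds_subcover V fun x hx => (hV x hx).1.isOpen.mem_nhds (hV x hx).2.2.1
  exact ⟨⋃ x ∈ t, V x, t.finite_toSet.isClopen_biUnion fun x hx => (hV x (htK x hx)).1,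
    t.isCompact_biUnion fun x hx => (hV x (htK x hx)).2.1, hKt,
    iUnion₂_subset fun x hx => (hV x (htK x hx)).2.2.2⟩

variable {f : X → X} {l : ℕ}

theorem exists_isClopen_mem_subset_disjoint_preimage_iterate (hf : Continuous f) (hl : l.Prime)
    {x : X} (hx : IsPeriodicPt f l x) (hfx : f x ≠ x) {U : Set X} (hU : U ∈ 𝓝 x) :
    ∃ W, IsClopen W ∧ x ∈ W ∧ W ⊆ U ∧ ∀ n ∈ Finset.Ioo 0 l, Disjoint W (f^[n] ⁻¹' W) := by
  have hsmall : ∀ᶠ s in (𝓝 x).smallSets,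
      s ⊆ U ∧ ∀ n ∈ Finset.Ioo 0 l, Disjoint s (f^[n] ⁻¹' s) := by
    refine (eventually_smallSets_subset.2 hU).and ((Finset.Ioo 0 l).eventually_all.2 fun n hn => ?_)
    obtain ⟨hn0, hnl⟩ := Finset.mem_Ioo.1 hn
    have hfnx : f^[n] x ≠ x := fun h => hfx (hx.isFixedPt_of_prime hl h hn0 hnl)
    obtain ⟨s, hs, hsd⟩ := exists_mem_nhds_disjoint_preimage (hf.iterate n).continuousAt hfnx
    exact (eventually_smallSets' fun _ _ hst hd => hd.mono hst (preimage_mono hst)).2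
      ⟨s, hs, hsd⟩
  obtain ⟨s, hs, hsP⟩ := eventually_smallSets.1 hsmall
  obtain ⟨W, hW, hxW, hWs⟩ := loc_compact_Haus_tot_disc_of_zero_dim.mem_nhds_iff.1 hs
  exact ⟨W, hW, hxW, (hsP W hWs).1, (hsP W hWs).2⟩

end ZeroDimensional

section Invariant

open Function

variable [LocallyCompactSpace X] [T2Space X] [TotallyDisconnectedSpace X] {f : X → X} {l : ℕ}

theorem IsClopen.exists_isClopen_indicator_eq_birkhoffSum {M : Type*} [Ring M] [Nontrivial M]
    (hf : Continuous f) (hl : l.Prime) (hfl : ∀ x, IsPeriodicPt f l x) {V : Set X}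
    (hV : IsClopen V) (hVc : IsCompact V) (hVf : f ⁻¹' V = V) (hVfix : ∀ x ∈ V, f x ≠ x) :
    ∃ E, IsClopen E ∧ E ⊆ V ∧ V.indicator 1 = birkhoffSum f (E.indicator (1 : X → M)) l := by
  have hW : ∀ x ∈ V, ∃ W, IsClopen W ∧ x ∈ W ∧ W ⊆ V ∧
      ∀ n ∈ Finset.Ioo 0 l, Disjoint W (f^[n] ⁻¹' W) := fun x hx =>
    exists_isClopen_mem_subset_disjoint_preimage_iterate hf hl (hfl x) (hVfix x hx)
      (hV.isOpen.mem_nhds hx)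
  choose! W hW using hW
  obtain ⟨t, htV, hVt⟩ :=
    hVc.elim_nhds_subcover W fun x hx => (hW x hx).1.isOpen.mem_nhds (hW x hx).2.1
  obtain ⟨E, hE, hEW, hEeq⟩ := exists_isClopen_indicator_biUnion_eq_birkhoffSum (M := M) hf
    hl.pos hfl t (fun x hx => (hW x (htV x hx)).1) (fun x hx => (hW x (htV x hx)).2.2.2)
  have hVfi : ∀ i, f^[i] ⁻¹' V = V := fun i => by
    rw [preimage_iterate_eq]
    exact IsFixedPt.iterate (f := Set.preimage f) hVf i
  have hsat : ⋃ x ∈ t, ⋃ i ∈ Finset.range l, f^[i] ⁻¹' W x = V := by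
    refine subset_antisymm (iUnion₂_subset fun x hx => iUnion₂_subset fun i _ => ?_)
      (hVt.trans (iUnion₂_mono fun x _ => ?_))
    · exact (hVfi i).subset.trans' (preimage_mono (hW x (htV x hx)).2.2.1)
    · exact subset_biUnion_of_mem (u := fun i => f^[i] ⁻¹' W x) (Finset.mem_range.2 hl.pos)
  exact ⟨E, hE, hEW.trans (iUnion₂_subset fun x hx => (hW x (htV x hx)).2.2.1), hsat ▸ hEeq⟩

theorem exists_isClopen_isCompact_invariant_preimage_val_eq (hf : Continuous f) (hl : 0 < l)
    (hfl : ∀ x, IsPeriodicPt f l x) {S : Set X} (hS : IsClosed S) (hSf : ∀ x ∈ S, f x = x)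
    {A : Set S} (hA : IsClopen A) (hAc : IsCompact A) :
    ∃ V : Set X, IsClopen V ∧ IsCompact V ∧ f ⁻¹' V = V ∧ (↑) ⁻¹' V = A := by
  obtain ⟨C, hC, hCc, hAC, hCA⟩ :=
    (hAc.image continuous_subtype_val).exists_isClopen_isCompact_between
      (hS.isClosedMap_subtype_val _ hA.compl.isClosed).isOpen_compl
      (by rintro _ ⟨a, ha, rfl⟩ ⟨b, hb, hab⟩; exact hb (Subtype.val_injective hab ▸ ha))
  set V := ⋂ i ∈ Finset.range l, f^[i] ⁻¹' C
  have hV : IsClopen V :=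
    (Finset.range l).finite_toSet.isClopen_biInter fun i _ => hC.preimage (hf.iterate i)
  have hVC : V ⊆ C := biInter_subset_of_mem (t := fun i => f^[i] ⁻¹' C) (Finset.mem_range.2 hl)
  refine ⟨V, hV, hCc.of_isClosed_subset hV.isClosed hVC, ?_, ?_⟩
  · ext x
    simpa [V] using (hfl x).forall_lt_iterate_apply_iff (· ∈ C)
  · ext ⟨x, hx⟩
    have hxV : x ∈ V ↔ x ∈ C := by
      simp only [V, mem_iInter₂, Finset.mem_range, mem_preimage, iterate_fixed (hSf x hx)]
      exact ⟨fun h => h 0 hl, fun h _ _ => h⟩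
    rw [mem_preimage, hxV]
    exact ⟨fun hxC => not_not.1 fun h => hCA hxC ⟨_, h, rfl⟩, fun h => hAC ⟨_, h, rfl⟩⟩

end Invariant

namespace Ccinf

theorem indicator_one_mem {V : Set X} (hV : IsClopen V) (hVc : IsCompact V) :
    V.indicator 1 ∈ Ccinf X k :=
  ⟨LocallyConstant.coe_charFn k hV ▸ (LocallyConstant.charFn k hV).isLocallyConstant,
    HasCompactSupport.intro' hVc hV.isClosed fun _ hx => indicator_of_notMem hx 1⟩

theorem isCompact_fiber (f : Ccinf X k) {c : k} (hc : c ≠ 0) :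
    IsCompact {x | (f : X → k) x = c} :=
  f.2.2.of_isClosed_subset (f.2.1.isClopen_fiber c).isClosed fun x hx =>
    subset_tsupport _ (show (f : X → k) x ≠ 0 from hx ▸ hc)

theorem finite_range (f : Ccinf X k) : (range (f : X → k)).Finite := by
  have : CompactSpace (tsupport (f : X → k)) := isCompact_iff_compactSpace.1 f.2.2.isCompact
  have hfin : (range fun x : tsupport (f : X → k) => (f : X → k) x).Finite :=
    (f.2.1.comp_continuous continuous_subtype_val).range_finite
  refine (hfin.insert 0).subset ?_
  rintro _ ⟨x, rfl⟩
  by_cases hx : x ∈ tsupport (f : X → k)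
  · exact mem_insert_of_mem _ ⟨⟨x, hx⟩, rfl⟩
  · exact mem_insert_iff.2 (Or.inl (image_eq_zero_of_notMem_tsupport hx))

theorem mem_span_indicator_fiber (f : Ccinf X k) :
    f ∈ Submodule.span k
      {ψ : Ccinf X k | ∃ c ≠ 0, (ψ : X → k) = {x | (f : X → k) x = c}.indicator 1} := by
  classical
  set S := {ψ : Ccinf X k | ∃ c ≠ 0, (ψ : X → k) = {x | (f : X → k) x = c}.indicator 1}
  set s := (finite_range f).toFinset.erase 0
  have hψ : ∀ c ∈ s, ∃ ψ : Ccinf X k, (ψ : X → k) = {x | (f : X → k) x = c}.indicator 1 :=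
    fun c hc => ⟨⟨_, indicator_one_mem (f.2.1.isClopen_fiber c)
      (isCompact_fiber f (Finset.ne_of_mem_erase hc))⟩, rfl⟩
  choose! ψ hψ using hψ
  have hf : f = ∑ c ∈ s, c • ψ c := by
    refine Subtype.ext (funext fun x => ?_)
    have hterm : ∀ c ∈ s, c • ((ψ c : Ccinf X k) : X → k) x =
        if (f : X → k) x = c then c else 0 := fun c hc => by
      by_cases h : (f : X → k) x = c <;> simp [hψ c hc, h]
    rw [Submodule.coe_sum, Finset.sum_apply]
    simp only [Submodule.coe_smul, Pi.smul_apply]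
    rw [Finset.sum_congr rfl hterm, Finset.sum_ite_eq]
    split_ifs with hx
    · rfl
    · simpa [s] using hx
  rw [hf]
  exact Submodule.sum_mem _ fun c hc =>
    Submodule.smul_mem _ c (Submodule.subset_span ⟨c, Finset.ne_of_mem_erase hc, hψ c hc⟩)

end Ccinf

section Descent

open Function

theorem Homeomorph.isPeriodicPt_symm {γ : X ≃ₜ X} {n : ℕ} (hγ : ∀ x, IsPeriodicPt γ n x)
    (x : X) : IsPeriodicPt γ.symm n x :=
  ((LeftInverse.iterate γ.apply_symm_apply n x).symm.trans (hγ _)).symm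

theorem gammaT_eq_self_iff {γ : X ≃ₜ X} {φ : Ccinf X k} :
    gammaT γ φ = φ ↔ ∀ x, (φ : X → k) (γ.symm x) = (φ : X → k) x :=
  Subtype.ext_iff.trans funext_iff

theorem coe_gammaT_pow_apply (γ : X ≃ₜ X) (f : Ccinf X k) (i : ℕ) (x : X) :
    ((gammaT γ ^ i) f : X → k) x = (f : X → k) ((⇑γ.symm)^[i] x) := by
  induction i generalizing x with
  | zero => rfl
  | succ i ih => rw [pow_succ', Module.End.mul_apply, iterate_succ_apply, ← ih]; rfl

theorem coe_normOp (γ : X ≃ₜ X) (l : ℕ) (f : Ccinf X k) :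
    (normOp γ l f : X → k) = birkhoffSum γ.symm (f : X → k) l := by
  funext x
  simp only [normOp, LinearMap.sum_apply, Submodule.coe_sum, Finset.sum_apply,
    coe_gammaT_pow_apply, birkhoffSum]

theorem map_normOp_eq_zero {l : ℕ} [CharP k l] {γ : X ≃ₜ X} {I : Ccinf X k →ₗ[k] k}
    (hI : ∀ f, I (gammaT γ f) = I f) (f : Ccinf X k) : I (normOp γ l f) = 0 := by
  have hpow : ∀ i, I ((gammaT γ ^ i) f) = I f := fun i => by
    induction i with
    | zero => rfl
    | succ i ih => rw [pow_succ', Module.End.mul_apply, hI, ih]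
  simp [normOp, hpow, CharP.cast_eq_zero]

variable [LocallyCompactSpace X] [T2Space X] [TotallyDisconnectedSpace X]

theorem map_eq_zero_of_gammaT_eq_self {l : ℕ} (hl : l.Prime) [CharP k l] {γ : X ≃ₜ X}
    (hγl : ∀ x, IsPeriodicPt γ l x) {I : Ccinf X k →ₗ[k] k} (hI : ∀ f, I (gammaT γ f) = I f)
    {φ : Ccinf X k} (hφ : gammaT γ φ = φ) (hφ0 : ∀ x, γ x = x → (φ : X → k) x = 0) :
    I φ = 0 := by
  refine LinearMap.mem_ker.1 (Submodule.span_le.2 ?_ (Ccinf.mem_span_indicator_fiber φ))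
  rintro ψ ⟨c, hc, hψ⟩
  have hVc := Ccinf.isCompact_fiber φ hc
  obtain ⟨E, hE, hEV, hVE⟩ :=
    (φ.2.1.isClopen_fiber c).exists_isClopen_indicator_eq_birkhoffSum (M := k)
      γ.symm.continuous hl (Homeomorph.isPeriodicPt_symm hγl) hVc
      (by ext x; simp [gammaT_eq_self_iff.1 hφ x])
      fun x hx hfix => hc (hx.symm.trans (hφ0 x (γ.symm_apply_eq.1 hfix).symm))
  set e : Ccinf X k :=
    ⟨E.indicator 1, Ccinf.indicator_one_mem hE (hVc.of_isClosed_subset hE.isClosed hEV)⟩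
  have hψE : ψ = normOp γ l e := Subtype.ext <| by rw [hψ, hVE, coe_normOp]
  rw [SetLike.mem_coe, LinearMap.mem_ker, hψE, map_normOp_eq_zero hI]

theorem exists_gammaT_eq_self_resL_eq {l : ℕ} (hl : 0 < l) {γ : X ≃ₜ X}
    (hγl : ∀ x, IsPeriodicPt γ l x) (g : Ccinf {x : X // γ x = x} k) :
    ∃ φ : Ccinf X k, gammaT γ φ = φ ∧ resL γ φ = g := by
  suffices g ∈ (LinearMap.eqLocus (gammaT γ) LinearMap.id).map (resL γ) by
    obtain ⟨φ, hφ, rfl⟩ := this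
    exact ⟨φ, hφ, rfl⟩
  refine Submodule.span_le.2 ?_ (Ccinf.mem_span_indicator_fiber g)
  rintro ψ ⟨c, hc, hψ⟩
  obtain ⟨V, hV, hVc, hVf, hVA⟩ :=
    exists_isClopen_isCompact_invariant_preimage_val_eq (S := {x | γ x = x}) γ.symm.continuous
      hl (Homeomorph.isPeriodicPt_symm hγl) (isClosed_eq γ.continuous continuous_id)
      (fun x hx => γ.symm_apply_eq.2 hx.symm) (g.2.1.isClopen_fiber c)
      (Ccinf.isCompact_fiber g hc)
  refine ⟨⟨V.indicator 1, Ccinf.indicator_one_mem hV hVc⟩, ?_, Subtype.ext ?_⟩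
  · refine gammaT_eq_self_iff.2 fun x => ?_
    change (γ.symm ⁻¹' V).indicator 1 x = _
    rw [hVf]
  · rw [hψ]
    exact congrArg (Set.indicator · 1) hVA

end Descent

theorem invariant_functional_descends_general
    (l : ℕ) (hl : l.Prime)
    (X : Type*) [TopologicalSpace X] [LocallyCompactSpace X] [T2Space X]
    [TotallyDisconnectedSpace X]
    (γ : X ≃ₜ X) (hγl : ∀ x, (⇑γ)^[l] x = x)
    (k : Type*) [Field k] [CharP k l]
    (I : Ccinf X k →ₗ[k] k) (hI : ∀ f : Ccinf X k, I (gammaT γ f) = I f) :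
    ∃! J : Ccinf {x : X // γ x = x} k →ₗ[k] k,
      ∀ φ : Ccinf X k, gammaT γ φ = φ → I φ = J (resL γ φ) := by
  let M := LinearMap.eqLocus (gammaT (k := k) γ) LinearMap.id
  let r := (resL γ).domRestrict M
  have hr : Surjective r := fun g => by
    obtain ⟨φ, hφ, rfl⟩ := exists_gammaT_eq_self_resL_eq hl.pos hγl g
    exact ⟨⟨φ, hφ⟩, rfl⟩
  have hker : LinearMap.ker r ≤ LinearMap.ker (I.domRestrict M) := fun φ hφ =>
    map_eq_zero_of_gammaT_eq_self hl hγl hI φ.2 fun x hx =>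
      congr_fun (congr_arg Subtype.val (LinearMap.mem_ker.1 hφ)) ⟨x, hx⟩
  have hfactor := LinearMap.exists_comp_eq_of_surjective_of_ker_le (M := M) hr hker
  obtain ⟨J, hJ⟩ := hfactor
  refine ⟨J, fun φ hφ => (hJ ⟨φ, hφ⟩).symm, fun J' hJ' => LinearMap.ext fun g => ?_⟩
  obtain ⟨φ, rfl⟩ := hr g
  exact (hJ' φ φ.2).symm.trans (hJ φ).symm

/-- Let `γ` be a homeomorphism, of order dividing the prime `l`, of a locally compact,
Hausdorff, totally disconnected, second countable space `X`, and let `k` be a field of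
characteristic `l`. If `I : C_c^∞(X, k) → k` is a `γ`-invariant `k`-linear functional,
then there is a unique `k`-linear functional `J : C_c^∞(X^γ, k) → k` such that
`I(φ) = J(φ|_{X^γ})` for every `γ`-invariant `φ ∈ C_c^∞(X, k)`. -/
theorem invariant_functional_descends
    (l : ℕ) (hl : l.Prime)
    (X : Type*) [TopologicalSpace X] [LocallyCompactSpace X] [T2Space X]
    [TotallyDisconnectedSpace X] [SecondCountableTopology X]
    (γ : X ≃ₜ X) (hγl : ∀ x, (⇑γ)^[l] x = x)
    (k : Type*) [Field k] [CharP k l]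
    (I : Ccinf X k →ₗ[k] k) (hI : ∀ f : Ccinf X k, I (gammaT γ f) = I f) :
    ∃! J : Ccinf {x : X // γ x = x} k →ₗ[k] k,
      ∀ φ : Ccinf X k, gammaT γ φ = φ → I φ = J (resL γ φ) :=
  invariant_functional_descends_general l hl X γ hγl k I hI
end
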